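/- The function F(m,x) = ∏_{s=1}^{2m} q^{-1}·ϑ_{q⁴}(x²q²p^{-s})·ϑ_{q⁴}(x^{-2}q²p^{s})/(ϑ_{q⁴}(x^{-2}p^{s})·ϑ_{q⁴}(x²p^{-s})) is invariant under the replacement p → p·q⁴: F is the same function of x whether evaluated with parameter p or with parameter p·q⁴, for any positive integer m and 0 < |p|, |q|, |p q⁴| < 1. -/

import Mathlib

/-!
Each factor of the product is invariant on its own. Put `a = q⁴`: replacing `p` by `p a`
multiplies the arguments `x⁻²q²pˢ`, `x⁻²pˢ` by `aˢ` and `x²q²p⁻ˢ`, `x²p⁻ˢ` by `a⁻ˢ`.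
Iterating `ϑ_a(a z) = -z⁻¹ ϑ_a(z)` gives `ϑ_a(aⁿ z) = (-1)ⁿ (a^(n choose 2) zⁿ)⁻¹ ϑ_a(z)`, so a
ratio `ϑ_a(aⁿ u) / ϑ_a(aⁿ v)` only picks up the factor `(v/u)ⁿ`. Here `v/u = q⁻²` for both
pairs while the shifts are `s` and `-s`, so the two factors cancel.
-/

open Complex Finset

/-- The q-Pochhammer infinite product `(x;a)_∞ = ∏_{n≥0} (1 - x aⁿ)`. -/
noncomputable def qPoch (x a : ℂ) : ℂ := ∏' n : ℕ, (1 - x * a ^ n)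

/-- The Jacobi theta function `ϑ_a(x) = (x;a)_∞ (a x⁻¹;a)_∞ (a;a)_∞`. -/
noncomputable def theta (a x : ℂ) : ℂ := qPoch x a * qPoch (a * x⁻¹) a * qPoch a a

/-- The exchange function `F(m,x)` of eq. (2.6a), for positive `m`. -/
noncomputable def Fexch (q p : ℂ) (m : ℕ) (x : ℂ) : ℂ :=
  ∏ s ∈ Finset.Icc 1 (2 * m),
    q⁻¹ * theta (q ^ 4) (x ^ 2 * q ^ 2 * p ^ (-(s : ℤ))) *
      theta (q ^ 4) (x⁻¹ ^ 2 * q ^ 2 * p ^ (s : ℤ)) /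
      (theta (q ^ 4) (x⁻¹ ^ 2 * p ^ (s : ℤ)) * theta (q ^ 4) (x ^ 2 * p ^ (-(s : ℤ))))

variable {a : ℂ}

lemma multipliable_one_sub_mul_pow (x : ℂ) (ha : ‖a‖ < 1) :
    Multipliable fun n : ℕ => 1 - x * a ^ n := by
  simp_rw [sub_eq_add_neg]
  refine multipliable_one_add_of_summable ?_
  simpa [norm_mul, norm_pow] using
    (summable_geometric_of_lt_one (norm_nonneg a) ha).mul_left ‖x‖

lemma qPoch_eq_one_sub_mul (x : ℂ) (ha : ‖a‖ < 1) :
    qPoch x a = (1 - x) * qPoch (a * x) a := by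
  rw [qPoch, tprod_eq_zero_mul' ?_, qPoch]
  · simp only [pow_zero, mul_one, pow_succ]
    congr 1
    exact tprod_congr fun n => by ring
  · simpa only [pow_succ, mul_comm, mul_left_comm, mul_assoc] using
      multipliable_one_sub_mul_pow (a * x) ha

lemma theta_mul_left (ha : ‖a‖ < 1) (ha0 : a ≠ 0) {z : ℂ} (hz : z ≠ 0) :
    theta a (a * z) = -z⁻¹ * theta a z := by
  have h : a * (a * z)⁻¹ = z⁻¹ := by field_simp
  rw [theta, theta, h, qPoch_eq_one_sub_mul z⁻¹ ha, qPoch_eq_one_sub_mul z ha]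
  field_simp
  ring

lemma theta_pow_mul (ha : ‖a‖ < 1) (ha0 : a ≠ 0) {z : ℂ} (hz : z ≠ 0) (n : ℕ) :
    theta a (a ^ n * z) = (-1) ^ n * (a ^ n.choose 2 * z ^ n)⁻¹ * theta a z := by
  induction n with
  | zero => simp
  | succ n ih =>
    rw [pow_succ', mul_assoc, theta_mul_left ha ha0 (by positivity), ih,
      Nat.choose_succ_succ', Nat.choose_one_right, pow_add]
    field_simp
    ring

lemma theta_pow_mul_div_theta_pow_mul (ha : ‖a‖ < 1) (ha0 : a ≠ 0) {u v : ℂ} (hu : u ≠ 0)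
    (hv : v ≠ 0) (n : ℕ) :
    theta a (a ^ n * u) / theta a (a ^ n * v) = (v / u) ^ n * (theta a u / theta a v) := by
  rw [theta_pow_mul ha ha0 hu, theta_pow_mul ha ha0 hv, mul_div_mul_comm, div_pow]
  congr 1
  field_simp

lemma theta_zpow_mul_div_theta_zpow_mul (ha : ‖a‖ < 1) (ha0 : a ≠ 0) {u v : ℂ} (hu : u ≠ 0)
    (hv : v ≠ 0) (n : ℤ) :
    theta a (a ^ n * u) / theta a (a ^ n * v) = (v / u) ^ n * (theta a u / theta a v) := by
  obtain ⟨k, rfl | rfl⟩ := n.eq_nat_or_neg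
  · simpa using theta_pow_mul_div_theta_pow_mul ha ha0 hu hv k
  · have h := theta_pow_mul_div_theta_pow_mul ha ha0 (u := a ^ (-(k : ℤ)) * u)
      (v := a ^ (-(k : ℤ)) * v) (by positivity) (by positivity) k
    simp only [← zpow_natCast, ← mul_assoc, ← zpow_add₀ ha0, add_neg_cancel, zpow_zero,
      one_mul] at h
    rw [h, mul_div_mul_left _ _ (zpow_ne_zero _ ha0), zpow_neg (v / u), zpow_natCast,
      inv_mul_cancel_left₀ (pow_ne_zero _ (div_ne_zero hv hu))]

theorem F_invariant_p_mul_q4_general (q p : ℂ) (hq0 : 0 < ‖q‖) (hq1 : ‖q‖ < 1)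
    (hp0 : 0 < ‖p‖)
    (m : ℕ) (x : ℂ) (hx : x ≠ 0) :
    Fexch q p m x = Fexch q (p * q ^ 4) m x := by
  have hq : q ≠ 0 := norm_pos_iff.mp hq0
  have hp : p ≠ 0 := norm_pos_iff.mp hp0
  refine prod_congr rfl fun s _ => ?_
  set a := q ^ 4 with ha_def
  have ha : ‖a‖ < 1 := by
    rw [ha_def, norm_pow]; exact pow_lt_one₀ (norm_nonneg q) hq1 (by norm_num)
  have ha0 : a ≠ 0 := pow_ne_zero 4 hq
  have shift (z : ℂ) (n : ℤ) : z * (p * a) ^ n = a ^ n * (z * p ^ n) := by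
    rw [mul_zpow]; ring
  set k : ℤ := (s : ℤ)
  rw [shift, shift, shift, shift, eq_comm]
  calc _ = q⁻¹ *
        (theta a (a ^ k * (x⁻¹ ^ 2 * q ^ 2 * p ^ k)) / theta a (a ^ k * (x⁻¹ ^ 2 * p ^ k))) *
        (theta a (a ^ (-k) * (x ^ 2 * q ^ 2 * p ^ (-k))) /
          theta a (a ^ (-k) * (x ^ 2 * p ^ (-k)))) := by ring
    _ = q⁻¹ *
        ((q ^ 2)⁻¹ ^ k * (theta a (x⁻¹ ^ 2 * q ^ 2 * p ^ k) / theta a (x⁻¹ ^ 2 * p ^ k))) *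
        ((q ^ 2)⁻¹ ^ (-k) *
          (theta a (x ^ 2 * q ^ 2 * p ^ (-k)) / theta a (x ^ 2 * p ^ (-k)))) := by
      rw [theta_zpow_mul_div_theta_zpow_mul ha ha0 (by positivity) (by positivity),
        theta_zpow_mul_div_theta_zpow_mul ha ha0 (by positivity) (by positivity)]
      congr 3 <;> field_simp
    _ = _ := by
      rw [zpow_neg]
      field_simp

theorem F_invariant_p_mul_q4 (q p : ℂ) (hq0 : 0 < ‖q‖) (hq1 : ‖q‖ < 1)
    (hp0 : 0 < ‖p‖) (hp1 : ‖p‖ < 1)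
    (hpq4 : ‖p * q ^ 4‖ < 1)
    (m : ℕ) (hm : 0 < m) (x : ℂ) (hx : x ≠ 0)
    (hden : ∀ s ∈ Finset.Icc 1 (2 * m),
      theta (q ^ 4) (x⁻¹ ^ 2 * p ^ (s : ℤ)) ≠ 0 ∧
      theta (q ^ 4) (x ^ 2 * p ^ (-(s : ℤ))) ≠ 0)
    (hden' : ∀ s ∈ Finset.Icc 1 (2 * m),
      theta (q ^ 4) (x⁻¹ ^ 2 * (p * q ^ 4) ^ (s : ℤ)) ≠ 0 ∧
      theta (q ^ 4) (x ^ 2 * (p * q ^ 4) ^ (-(s : ℤ))) ≠ 0) :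
    Fexch q p m x = Fexch q (p * q ^ 4) m x :=
  F_invariant_p_mul_q4_general q p hq0 hq1 hp0 m x hx
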